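/- arXiv:math/0609014 — 6 statements merged into one kernel-verified Lean document; each statement's English description precedes it below -/
import Mathlib

section
/- Let Δ be a simply laced root system and p > 2. Suppose f: Λ → V satisfies (f(β)|f(β′)) ≡ ⟨β,β′⟩ (mod p) for all β, β′, and no component of Δ contains two distinct simple roots with equal images. Then f restricted to Δ is injective, and f(Δ) ⊆ Γ = {x ∈ V \ {0} : (x|x) = 2}. -/
open Finset Matrix
namespace Stmt2Aux
variable {n : ℕ} (A : Matrix (Fin n) (Fin n) ℤ)

def Qf (x y : Fin n → ℤ) : ℤ := x ⬝ᵥ A.mulVec y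

lemma Qf_sum (x y : Fin n → ℤ) : Qf A x y = ∑ i, ∑ j, x i * A i j * y j := by
  simp [Qf, dotProduct, Matrix.mulVec, Finset.mul_sum, mul_assoc]

lemma Qf_symm (hAsym : A.IsSymm) (x y : Fin n → ℤ) : Qf A x y = Qf A y x := by
  rw [Qf_sum, Qf_sum, Finset.sum_comm]
  refine Finset.sum_congr rfl fun j _ => Finset.sum_congr rfl fun i _ => ?_
  rw [← hAsym.apply i j]; ring

lemma Qf_sub_left (x y z : Fin n → ℤ) : Qf A (x - y) z = Qf A x z - Qf A y z := by
  simp [Qf, sub_dotProduct]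
lemma Qf_sub_right (x y z : Fin n → ℤ) : Qf A z (x - y) = Qf A z x - Qf A z y := by
  simp [Qf, Matrix.mulVec_sub, dotProduct_sub]
lemma Qf_add_left (x y z : Fin n → ℤ) : Qf A (x + y) z = Qf A x z + Qf A y z := by
  simp [Qf, add_dotProduct]
lemma Qf_add_right (x y z : Fin n → ℤ) : Qf A z (x + y) = Qf A z x + Qf A z y := by
  simp [Qf, Matrix.mulVec_add, dotProduct_add]
lemma Qf_smul_left (c : ℤ) (x z : Fin n → ℤ) : Qf A (c • x) z = c * Qf A x z := by
  simp [Qf_sum, Finset.mul_sum, Pi.smul_apply, smul_eq_mul, mul_assoc]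
lemma Qf_smul_right (c : ℤ) (x z : Fin n → ℤ) : Qf A z (c • x) = c * Qf A z x := by
  simp only [Qf_sum, Finset.mul_sum, Pi.smul_apply, smul_eq_mul]
  refine Finset.sum_congr rfl fun i _ => Finset.sum_congr rfl fun j _ => by ring
lemma Qf_neg_left (x z : Fin n → ℤ) : Qf A (-x) z = - Qf A x z := by
  simp [Qf, neg_dotProduct]
lemma Qf_neg_right (x z : Fin n → ℤ) : Qf A z (-x) = - Qf A z x := by
  simp [Qf, Matrix.mulVec_neg, dotProduct_neg]
lemma Qf_zero_right (z : Fin n → ℤ) : Qf A z 0 = 0 := by simp [Qf]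

lemma Qf_single_left (i : Fin n) (y : Fin n → ℤ) :
    Qf A (Pi.single i 1) y = ∑ j, A i j * y j := by
  simp [Qf, Matrix.mulVec, dotProduct, Pi.single_apply, ite_mul, Finset.sum_ite_eq]

lemma Qf_single_single (i j : Fin n) : Qf A (Pi.single i 1) (Pi.single j 1) = A i j := by
  rw [Qf_single_left]
  simp [Pi.single_apply]

lemma Qf_self_sum (x : Fin n → ℤ) : Qf A x x = ∑ i, x i * Qf A (Pi.single i 1) x := by
  simp only [Qf_single_left]
  simp [Qf, dotProduct, Matrix.mulVec]

lemma Qf_nonneg (hApos : ∀ x : Fin n → ℤ, x ≠ 0 → 0 < Qf A x x) (x : Fin n → ℤ) : 0 ≤ Qf A x x := by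
  rcases eq_or_ne x 0 with h | h
  · subst h; simp [Qf]
  · exact (hApos x h).le

lemma Qf_eq_zero (hApos : ∀ x : Fin n → ℤ, x ≠ 0 → 0 < Qf A x x) {x : Fin n → ℤ} (h : Qf A x x = 0) : x = 0 := by
  by_contra hx
  exact absurd h (hApos x hx).ne'

lemma Qf_cs (hApos : ∀ x : Fin n → ℤ, x ≠ 0 → 0 < Qf A x x) (hAsym : A.IsSymm) (x y : Fin n → ℤ) :
    Qf A x y ^ 2 ≤ Qf A x x * Qf A y y := by
  rcases eq_or_ne y 0 with h | h
  · subst h; simp [Qf]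
  have ha : 0 < Qf A y y := hApos y h
  set a := Qf A y y with hadef
  set b := Qf A x y with hbdef
  have hz : 0 ≤ Qf A (a • x - b • y) (a • x - b • y) := Qf_nonneg A hApos _
  have hexp : Qf A (a • x - b • y) (a • x - b • y)
      = a * a * Qf A x x - a * b * Qf A x y - b * a * Qf A y x + b * b * a := by
    simp only [Qf_sub_left, Qf_sub_right, Qf_smul_left, Qf_smul_right]
    ring
  have hyx : Qf A y x = b := by rw [Qf_symm A hAsym y x]
  rw [hexp, hyx] at hz
  nlinarith [hz, ha]

end Stmt2Aux

namespace Stmt2Aux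

lemma p4_case {V : Type*} [AddCommGroup V] [Module (ZMod 4) V] [Module.Free (ZMod 4) V]
    (B : V →ₗ[ZMod 4] V →ₗ[ZMod 4] ZMod 4) (v : V) (hv : v + v = 0) (hBv : B v v = 2) :
    False := by
  let b := Module.Free.chooseBasis (ZMod 4) V
  set r := b.repr v with hr
  have hrc : ∀ c, r c + r c = 0 := by
    intro c
    have := congrArg (fun u => b.repr u c) hv
    simpa using this
  have hdec : ∀ a : ZMod 4, a + a = 0 → a = 0 ∨ a = 2 := by decide
  set w := b.repr.symm (r.mapRange (fun a => if a = 2 then 1 else 0) (by decide)) with hw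
  have hwv : (2 : ZMod 4) • w = v := by
    apply b.repr.injective
    rw [_root_.map_smul, hw, LinearEquiv.apply_symm_apply]
    ext c
    simp only [Finsupp.smul_apply, Finsupp.mapRange_apply, smul_eq_mul]
    rcases hdec (r c) (hrc c) with h | h <;> rw [h] <;> decide
  have h0 : B v v = 0 := by
    have h1 : B ((2 : ZMod 4) • w) ((2 : ZMod 4) • w) = ((2 : ZMod 4) * 2) * B w w := by
      simp only [_root_.map_smul, LinearMap.smul_apply, smul_eq_mul]; ring
    rw [← hwv, h1, show ((2 : ZMod 4) * 2) = 0 by decide, zero_mul]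
  rw [hBv] at h0
  exact absurd h0 (by decide)

lemma p3_case {n : ℕ} (A : Matrix (Fin n) (Fin n) ℤ) (hAsym : A.IsSymm)
    (hAdiag : ∀ i, A i i = 2)
    (hAoff : ∀ i j, i ≠ j → A i j = -1 ∨ A i j = 0)
    (hApos : ∀ x : Fin n → ℤ, x ≠ 0 → 0 < Qf A x x)
    {V : Type*} [AddCommGroup V] [Module (ZMod 3) V]
    (B : V →ₗ[ZMod 3] V →ₗ[ZMod 3] ZMod 3)
    (s : Fin n → V)
    (hcomp : ∀ i j : Fin n, i ≠ j →
      Relation.ReflTransGen (fun a b : Fin n => A a b ≠ 0) i j → s i ≠ s j)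
    (f : (Fin n → ℤ) → V) (hf : ∀ β, f β = ∑ i, β i • s i)
    (compat : ∀ x y, B (f x) (f y) = ((Qf A x y : ℤ) : ZMod 3))
    (δ : Fin n → ℤ) (h0 : f δ = 0) (h6 : Qf A δ δ = 6) : False := by
  -- linearity of f
  have f_sub : ∀ x y, f (x - y) = f x - f y := by
    intro x y
    simp [hf, sub_smul, Finset.sum_sub_distrib]
  have f_neg : ∀ x, f (-x) = - f x := by
    intro x
    simp [hf, neg_smul]
  have f_smul : ∀ (c : ℤ) x, f (c • x) = c • f x := by
    intro c x
    simp [hf, mul_smul, Finset.smul_sum]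
  have f_single : ∀ i, f (Pi.single i 1) = s i := by
    intro i
    rw [hf]
    rw [Finset.sum_eq_single i]
    · simp
    · intro j _ hj; simp [Pi.single_apply, hj]
    · simp
  have h3s : ∀ v : V, (3 : ℤ) • v = 0 := by
    intro v
    rw [← Int.cast_smul_eq_zsmul (ZMod 3), show ((3:ℤ):ZMod 3) = 0 by decide, zero_smul]
  -- membership of t-values
  have htval : ∀ γ : Fin n → ℤ, f γ = 0 → Qf A γ γ = 6 → ∀ i,
      Qf A (Pi.single i 1) γ = -3 ∨ Qf A (Pi.single i 1) γ = 0 ∨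
      Qf A (Pi.single i 1) γ = 3 := by
    intro γ hγ hγ6 i
    have hdvd : ((Qf A (Pi.single i 1) γ : ℤ) : ZMod 3) = 0 := by
      rw [← compat, hγ]
      simp
    rw [ZMod.intCast_zmod_eq_zero_iff_dvd] at hdvd
    have hcs := Qf_cs A hApos hAsym (Pi.single i 1) γ
    rw [Qf_single_single, hAdiag, hγ6] at hcs
    have hb1 : -3 ≤ Qf A (Pi.single i 1) γ := by nlinarith
    have hb2 : Qf A (Pi.single i 1) γ ≤ 3 := by nlinarith
    omega
  -- Claim A : a vector in the kernel of norm 6 with t-values +3 and -3 gives False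
  have claimA : ∀ γ : Fin n → ℤ, f γ = 0 → Qf A γ γ = 6 → ∀ i j,
      Qf A (Pi.single i 1) γ = 3 → Qf A (Pi.single j 1) γ = -3 → False := by
    intro γ hγ hγ6 i j hi hj
    have hij : i ≠ j := by
      intro h; rw [h, hj] at hi; omega
    set ε := γ - Pi.single i 1 with hε
    have hγi : Qf A γ (Pi.single i 1) = 3 := by rw [Qf_symm A hAsym]; exact hi
    have hγj : Qf A γ (Pi.single j 1) = -3 := by rw [Qf_symm A hAsym]; exact hj
    have hεε : Qf A ε ε = 2 := by
      simp only [hε, Qf_sub_left, Qf_sub_right, Qf_single_single]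
      rw [hγ6, hγi, hi, hAdiag]; ring
    have hεj : Qf A ε (Pi.single j 1) = -3 - A i j := by
      simp only [hε, Qf_sub_left, Qf_single_single]
      rw [hγj]
    have hcs := Qf_cs A hApos hAsym ε (Pi.single j 1)
    rw [Qf_single_single, hAdiag, hεε, hεj] at hcs
    have hAij : A i j = -1 := by
      rcases hAoff i j hij with h | h
      · exact h
      · rw [h] at hcs; omega
    have hsum0 : Qf A (ε + Pi.single j 1) (ε + Pi.single j 1) = 0 := by
      simp only [Qf_add_left, Qf_add_right, Qf_single_single]
      have hjε : Qf A (Pi.single j 1) ε = -3 - A i j := by rw [Qf_symm A hAsym]; exact hεj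
      rw [hεε, hεj, hjε, hAdiag, hAij]; ring
    have hε0 : ε + Pi.single j 1 = 0 := Qf_eq_zero A hApos hsum0
    have hεval : ε = - Pi.single j 1 := eq_neg_of_add_eq_zero_left hε0
    have hfε : f ε = - s i := by
      rw [hε, f_sub, hγ, f_single]; abel
    have hfε' : f ε = - s j := by
      rw [hεval, f_neg, f_single]
    have hss : s i = s j := by
      have := hfε.symm.trans hfε'
      exact neg_injective this
    exact hcomp i j hij (Relation.ReflTransGen.single (by rw [hAij]; norm_num)) hss
  -- key : a kernel vector of norm 6 with a +3 t-value gives False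
  have key3 : ∀ γ : Fin n → ℤ, f γ = 0 → Qf A γ γ = 6 → ∀ i,
      Qf A (Pi.single i 1) γ = 3 → False := by
    intro γ hγ hγ6 i hi
    by_cases hneg : ∃ j, Qf A (Pi.single j 1) γ = -3
    · obtain ⟨j, hj⟩ := hneg
      exact claimA γ hγ hγ6 i j hi hj
    push_neg at hneg
    set γ₃ := (3 : ℤ) • Pi.single i 1 - γ with hγ₃
    have hγi : Qf A γ (Pi.single i 1) = 3 := by rw [Qf_symm A hAsym]; exact hi
    have h₃0 : f γ₃ = 0 := by
      rw [hγ₃, f_sub, f_smul, f_single, hγ, h3s, sub_zero]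
    have h₃6 : Qf A γ₃ γ₃ = 6 := by
      simp only [hγ₃, Qf_sub_left, Qf_sub_right, Qf_smul_left, Qf_smul_right,
        Qf_single_single]
      rw [hγ6, hγi, hi, hAdiag]; ring
    have h₃t : ∀ j, Qf A (Pi.single j 1) γ₃ = 3 * A j i - Qf A (Pi.single j 1) γ := by
      intro j
      simp only [hγ₃, Qf_sub_right, Qf_smul_right, Qf_single_single]
    have hi₃ : Qf A (Pi.single i 1) γ₃ = 3 := by
      rw [h₃t, hi, hAdiag]; norm_num
    by_cases hneg₃ : ∃ j, Qf A (Pi.single j 1) γ₃ = -3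
    · obtain ⟨j, hj⟩ := hneg₃
      exact claimA γ₃ h₃0 h₃6 i j hi₃ hj
    push_neg at hneg₃
    -- all off-diagonal entries in row i vanish
    have hrow : ∀ j, j ≠ i → A i j = 0 := by
      intro j hj
      have htj := htval γ hγ hγ6 j
      have htj3 := htval γ₃ h₃0 h₃6 j
      have hne := hneg j
      have hne3 := hneg₃ j
      rw [h₃t j] at htj3 hne3
      have hAji : A j i = A i j := by rw [← hAsym.apply]
      rw [hAji] at htj3 hne3
      rcases hAoff i j hj.symm with h | h
      · rw [h] at htj3 hne3; omega
      · exact h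
    -- then t i = 2 * γ i = 3, contradiction
    have : Qf A (Pi.single i 1) γ = 2 * γ i := by
      rw [Qf_single_left]
      rw [Finset.sum_eq_single i]
      · rw [hAdiag]
      · intro j _ hj; rw [hrow j hj]; ring
      · simp
    omega
  -- existence of a nonzero t-value, and conclusion
  have hsum := Qf_self_sum A δ
  have hex : ∃ i, Qf A (Pi.single i 1) δ ≠ 0 := by
    by_contra hall
    push_neg at hall
    rw [h6] at hsum
    simp [hall] at hsum
  obtain ⟨i, hi⟩ := hex
  rcases htval δ h0 h6 i with h | h | h
  · -- t i = -3 : use -δ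
    have h0' : f (-δ) = 0 := by rw [f_neg, h0, neg_zero]
    have h6' : Qf A (-δ) (-δ) = 6 := by rw [Qf_neg_left, Qf_neg_right, h6]; ring
    have hi' : Qf A (Pi.single i 1) (-δ) = 3 := by rw [Qf_neg_right, h]; ring
    exact key3 (-δ) h0' h6' i hi'
  · exact hi h
  · exact key3 δ h0 h6 i h

end Stmt2Aux

open Stmt2Aux

/-- Setup as before: the root lattice of a simply laced root
system is `ℤⁿ` with inner product given by the Cartan matrix `A`, and the
roots are `Δ = {β | ⟨β, β⟩ = 2}`.  Suppose `p > 2`, the images `s i` of the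
simple roots satisfy `(s i | s j) = A i j (mod p)` (hence
`(f β | f β') ≡ ⟨β, β'⟩ (mod p)` for all `β, β'`), and no two distinct simple
roots lying in the same component of the Dynkin diagram have equal images.
Then `f` is injective on `Δ`, and `f(Δ) ⊆ Γ = {x ≠ 0 | (x|x) = 2}`. -/
theorem stmt_2 (n p : ℕ) (hp : 2 < p)
    (A : Matrix (Fin n) (Fin n) ℤ) (hAsym : A.IsSymm)
    (hAdiag : ∀ i, A i i = 2)
    (hAoff : ∀ i j, i ≠ j → A i j = -1 ∨ A i j = 0)
    (hApos : ∀ x : Fin n → ℤ, x ≠ 0 → 0 < ∑ i, ∑ j, x i * A i j * x j)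
    (V : Type*) [AddCommGroup V] [Module (ZMod p) V] [Module.Free (ZMod p) V]
    (B : V →ₗ[ZMod p] V →ₗ[ZMod p] ZMod p) (hBsym : ∀ x y, B x y = B y x)
    (s : Fin n → V) (hs : ∀ i j, B (s i) (s j) = ((A i j : ℤ) : ZMod p))
    (hcomp : ∀ i j : Fin n, i ≠ j →
      Relation.ReflTransGen (fun a b : Fin n => A a b ≠ 0) i j → s i ≠ s j)
    (f : (Fin n → ℤ) → V) (hf : ∀ β, f β = ∑ i, β i • s i)
    (Δ : Set (Fin n → ℤ))
    (hΔ : Δ = {β | ∑ i, ∑ j, β i * A i j * β j = 2}) :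
    Set.InjOn f Δ ∧ ∀ β ∈ Δ, f β ≠ 0 ∧ B (f β) (f β) = 2 := by
  classical
  have hApos' : ∀ x : Fin n → ℤ, x ≠ 0 → 0 < Qf A x x := by
    intro x hx; rw [Qf_sum]; exact hApos x hx
  have f_sub : ∀ x y, f (x - y) = f x - f y := by
    intro x y
    simp [hf, sub_smul, Finset.sum_sub_distrib]
  have f_neg : ∀ x, f (-x) = - f x := by
    intro x
    simp [hf, neg_smul]
  have compat : ∀ x y, B (f x) (f y) = ((Qf A x y : ℤ) : ZMod p) := by
    intro x y
    rw [hf x, hf y]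
    have hsm : ∀ (c : ℤ) (v : V), c • v = ((c : ZMod p)) • v :=
      fun c v => (Int.cast_smul_eq_zsmul _ _ _).symm
    simp only [hsm]
    simp only [map_sum, _root_.map_smul, LinearMap.sum_apply, LinearMap.smul_apply,
      smul_eq_mul, hs]
    rw [Qf_sum]
    push_cast
    simp only [Finset.mul_sum]
    conv_lhs => rw [Finset.sum_comm]
    exact Finset.sum_congr rfl fun i _ => Finset.sum_congr rfl fun j _ => by ring
  have hQΔ : ∀ β ∈ Δ, Qf A β β = 2 := by
    intro β hβ
    rw [Qf_sum]
    rw [hΔ] at hβ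
    exact hβ
  have part2 : ∀ β ∈ Δ, f β ≠ 0 ∧ B (f β) (f β) = 2 := by
    intro β hβ
    have hB : B (f β) (f β) = 2 := by
      rw [compat, hQΔ β hβ]
      norm_num
    refine ⟨?_, hB⟩
    intro h0
    rw [h0] at hB
    simp only [map_zero, LinearMap.zero_apply] at hB
    have h2 : ((2 : ℕ) : ZMod p) = 0 := by
      rw [Nat.cast_ofNat]
      exact hB.symm
    rw [ZMod.natCast_eq_zero_iff] at h2
    exact absurd (Nat.le_of_dvd (by norm_num) h2) (by omega)
  refine ⟨?_, part2⟩
  intro β hβ β' hβ' hfe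
  set c := Qf A β β' with hc
  clear_value c
  have hc' : Qf A β' β = c := (Qf_symm A hAsym β' β).trans hc.symm
  have hcast : ((c : ℤ) : ZMod p) = ((2 : ℤ) : ZMod p) := by
    rw [hc, ← compat, hfe, compat, hQΔ β' hβ']
  have hdvd : (p : ℤ) ∣ 2 - c := by
    rw [← ZMod.intCast_zmod_eq_zero_iff_dvd, Int.cast_sub, hcast, sub_self]
  have hcs := Qf_cs A hApos' hAsym β β'
  rw [hQΔ β hβ, hQΔ β' hβ', ← hc] at hcs
  have hcb1 : -2 ≤ c := by nlinarith
  have hcb2 : c ≤ 2 := by nlinarith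
  by_cases hc2 : c = 2
  · have h0 : Qf A (β - β') (β - β') = 0 := by
      simp only [Qf_sub_left, Qf_sub_right]
      rw [hQΔ β hβ, hQΔ β' hβ', ← hc, hc', hc2]
      ring
    have := Qf_eq_zero A hApos' h0
    exact sub_eq_zero.mp this
  -- c < 2, so p ∈ {3, 4} and c = 2 - p
  exfalso
  obtain ⟨k, hk⟩ := hdvd
  have hp3 : 3 ≤ (p : ℤ) := by exact_mod_cast hp
  have hclt : c < 2 := lt_of_le_of_ne hcb2 hc2
  have h1c : (1 : ℤ) ≤ 2 - c := by omega
  have hkpos : 0 < k := by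
    rcases le_or_gt k 0 with h | h
    · exfalso
      have hnp : (p : ℤ) * k ≤ 0 := mul_nonpos_of_nonneg_of_nonpos (by positivity) h
      linarith
    · exact h
  have hklt : k < 2 := by
    rcases le_or_gt 2 k with h | h
    · exfalso
      have h2 : (p : ℤ) * 2 ≤ (p : ℤ) * k := mul_le_mul_of_nonneg_left h (by positivity)
      linarith
    · exact h
  have hk1 : k = 1 := by omega
  rw [hk1, mul_one] at hk
  have hpc : (p : ℤ) = 2 - c := hk.symm
  have hp34 : p = 3 ∨ p = 4 := by
    have h1 : (p : ℤ) ≤ 4 := by linarith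
    omega
  rcases hp34 with hpv | hpv
  · -- p = 3, c = -1
    subst hpv
    have hcm1 : c = -1 := by omega
    apply p3_case A hAsym hAdiag hAoff hApos' B s hcomp f hf compat (β - β')
    · rw [f_sub, hfe, sub_self]
    · simp only [Qf_sub_left, Qf_sub_right]
      rw [hQΔ β hβ, hQΔ β' hβ', ← hc, hc', hcm1]
      ring
  · -- p = 4, c = -2
    subst hpv
    have hcm2 : c = -2 := by omega
    have hsum0 : Qf A (β + β') (β + β') = 0 := by
      simp only [Qf_add_left, Qf_add_right]
      rw [hQΔ β hβ, hQΔ β' hβ', ← hc, hc', hcm2]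
      ring
    have hββ' : β' = -β := by
      exact eq_neg_of_add_eq_zero_right (Qf_eq_zero A hApos' hsum0)
    have hv : f β + f β = 0 := by
      nth_rewrite 2 [hfe]
      rw [hββ', f_neg, add_neg_cancel]
    exact p4_case B (f β) hv (part2 β hβ).2
end

section
/- Let F = ℤ/2 × ℤ/2 with its unique symplectic form ((a|a') = 0 if a = 0, a' = 0, or a = a', and 1 otherwise), let V = F³ with the form (abc|a'b'c') = (a|a') + (b|b') + (c|c'), and let s₁ = 100, s₂ = 030, s₃ = 300, s₄ = 111, s₅ = 003, s₆ = 001, s₇ = 033 (elements of F identified with {0,1,2,3} via binary). Then (sᵢ|sⱼ) = 1 exactly when {i,j} is an edge of the E₇ Dynkin diagram (i.e. {i,j} ∈ {{1,3},{3,4},{2,4},{4,5},{5,6},{6,7}}), and (sᵢ|sⱼ) = 0 for all other i ≠ j; moreover the sᵢ are pairwise distinct and nonzero. -/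
/-- The four-element group `F = ℤ/2 × ℤ/2`. -/
abbrev Fgrp : Type := ZMod 2 × ZMod 2

/-- The elements of `F` written as `0, 1, 2, 3` via binary digits. -/
def Fel : Fin 4 → Fgrp
  | 0 => (0, 0)
  | 1 => (0, 1)
  | 2 => (1, 0)
  | 3 => (1, 1)

/-- The unique symplectic form on `F`: `(a|a') = 0` iff `a = 0`, `a' = 0`, or
`a = a'`, and `(a|a') = 1` otherwise. -/
def Fform (a a' : Fgrp) : ZMod 2 :=
  if a = 0 ∨ a' = 0 ∨ a = a' then 0 else 1

/-- `V = F³`, with the form `(abc|a'b'c') = (a|a') + (b|b') + (c|c')`. -/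
def Vform (x y : Fin 3 → Fgrp) : ZMod 2 := ∑ i, Fform (x i) (y i)

/-- `s₁ = 100, s₂ = 030, s₃ = 300, s₄ = 111, s₅ = 003, s₆ = 001, s₇ = 033`. -/
def sE7 : Fin 7 → Fin 3 → Fgrp
  | 0 => ![Fel 1, Fel 0, Fel 0]
  | 1 => ![Fel 0, Fel 3, Fel 0]
  | 2 => ![Fel 3, Fel 0, Fel 0]
  | 3 => ![Fel 1, Fel 1, Fel 1]
  | 4 => ![Fel 0, Fel 0, Fel 3]
  | 5 => ![Fel 0, Fel 0, Fel 1]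
  | 6 => ![Fel 0, Fel 3, Fel 3]

/-- The edges of the `E₇` Dynkin diagram: node 2 attaches to node 4 and the
chain is 1–3–4–5–6–7 (written with `Fin 7` indices `0, …, 6`). -/
def E7edges : Finset (Finset (Fin 7)) :=
  {{0, 2}, {2, 3}, {1, 3}, {3, 4}, {4, 5}, {5, 6}}

/-- `(sᵢ|sⱼ) = 1` exactly when `{i,j}` is an edge of the
`E₇` Dynkin diagram, `(sᵢ|sⱼ) = 0` for all other `i ≠ j`, and the `sᵢ` are
pairwise distinct and nonzero. -/
theorem stmt_7 :
    (∀ i j : Fin 7, i ≠ j →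
        Vform (sE7 i) (sE7 j) = if ({i, j} : Finset (Fin 7)) ∈ E7edges then 1 else 0) ∧
      Function.Injective sE7 ∧ ∀ i, sE7 i ≠ 0 := by
  refine ⟨by decide, by decide, by decide⟩
end

section
/- Let Γ₇⁺ = {(a,b,c) ∈ F³ : exactly one of a, b, c equals 0}, and let (·|·) be the symplectic form on F³ as above. For distinct x, y ∈ Γ₇⁺: (x|y) = 0 if and only if x and y agree in exactly one coordinate. -/
/-- `Γ₇⁺`: the 27 triples in `F³` with exactly one zero coordinate. -/
def Γ7pos : Set (Fin 3 → Fgrp) :=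
  {x | (Finset.univ.filter fun i => x i = 0).card = 1}

set_option maxRecDepth 20000 in
/-- For distinct `x, y ∈ Γ₇⁺`: `(x|y) = 0` iff `x` and `y`
agree in exactly one coordinate. -/
theorem stmt_10 (x y : Fin 3 → Fgrp) (hx : x ∈ Γ7pos) (hy : y ∈ Γ7pos)
    (hxy : x ≠ y) :
    Vform x y = 0 ↔ (Finset.univ.filter fun i => x i = y i).card = 1 := by
  simp only [Γ7pos, Set.mem_setOf_eq] at hx hy
  revert hx hy hxy; revert x y; decide
end

section
/- Let β₁, β₂ be orthogonal roots in the stratum Δ₇⁺ of positive roots of E₈ (roots β with β⁷ = 1, β⁸ = 0 in simple-root coordinates). Then there exists a unique root β₃ ∈ Δ₇⁺ orthogonal to both β₁ and β₂ such that β₁ + β₂ + β₃ = −(α̂₈ + 2α₈), where α̂₈ is the lowest root of E₈ and α₈ the eighth simple root. -/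
/-- The Cartan matrix of `E₈` (node 2 attached to node 4, chain
1–3–4–5–6–7–8). -/
def cartanE8 : Matrix (Fin 8) (Fin 8) ℤ :=
  !![ 2,  0, -1,  0,  0,  0,  0,  0;
      0,  2,  0, -1,  0,  0,  0,  0;
     -1,  0,  2, -1,  0,  0,  0,  0;
      0, -1, -1,  2, -1,  0,  0,  0;
      0,  0,  0, -1,  2, -1,  0,  0;
      0,  0,  0,  0, -1,  2, -1,  0;
      0,  0,  0,  0,  0, -1,  2, -1;
      0,  0,  0,  0,  0,  0, -1,  2]

/-- The inner product on the `E₈` root lattice (simple-root coordinates). -/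
def innE8 (x y : Fin 8 → ℤ) : ℤ := ∑ i, ∑ j, x i * cartanE8 i j * y j

/-- The stratum `Δ₇⁺` of positive `E₈` roots `β` with `β⁷ = 1` and `β⁸ = 0`
in simple-root coordinates (27 elements). -/
def Δ7posE8 : Set (Fin 8 → ℤ) :=
  {β | innE8 β β = 2 ∧ (∀ i, 0 ≤ β i) ∧ β 6 = 1 ∧ β 7 = 0}

/-- The eighth simple root `α₈` of `E₈`. -/
def α8 : Fin 8 → ℤ := fun i => if i = 7 then 1 else 0

/-- The lowest root `α̂₈` of `E₈` (the negative of the highest root). -/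
def lowestE8 : Fin 8 → ℤ := ![-2, -3, -4, -6, -5, -4, -3, -2]

/- ---------- auxiliary material ---------- -/

lemma innE8_eq (x y : Fin 8 → ℤ) : innE8 x y =
    2*(x 0*y 0 + x 1*y 1 + x 2*y 2 + x 3*y 3 + x 4*y 4 + x 5*y 5 + x 6*y 6 + x 7*y 7)
    - (x 0*y 2 + x 2*y 0) - (x 1*y 3 + x 3*y 1) - (x 2*y 3 + x 3*y 2)
    - (x 3*y 4 + x 4*y 3) - (x 4*y 5 + x 5*y 4) - (x 5*y 6 + x 6*y 5)
    - (x 6*y 7 + x 7*y 6) := by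
  simp only [innE8, Fin.sum_univ_eight, show cartanE8 0 0 = 2 from rfl, show cartanE8 0 1 = 0 from rfl, show cartanE8 0 2 = -1 from rfl, show cartanE8 0 3 = 0 from rfl, show cartanE8 0 4 = 0 from rfl, show cartanE8 0 5 = 0 from rfl, show cartanE8 0 6 = 0 from rfl, show cartanE8 0 7 = 0 from rfl, show cartanE8 1 0 = 0 from rfl, show cartanE8 1 1 = 2 from rfl, show cartanE8 1 2 = 0 from rfl, show cartanE8 1 3 = -1 from rfl, show cartanE8 1 4 = 0 from rfl, show cartanE8 1 5 = 0 from rfl, show cartanE8 1 6 = 0 from rfl, show cartanE8 1 7 = 0 from rfl, show cartanE8 2 0 = -1 from rfl, show cartanE8 2 1 = 0 from rfl, show cartanE8 2 2 = 2 from rfl, show cartanE8 2 3 = -1 from rfl, show cartanE8 2 4 = 0 from rfl, show cartanE8 2 5 = 0 from rfl, show cartanE8 2 6 = 0 from rfl, show cartanE8 2 7 = 0 from rfl, show cartanE8 3 0 = 0 from rfl, show cartanE8 3 1 = -1 from rfl, show cartanE8 3 2 = -1 from rfl, show cartanE8 3 3 = 2 from rfl, show cartanE8 3 4 = -1 from rfl,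 show cartanE8 3 5 = 0 from rfl, show cartanE8 3 6 = 0 from rfl, show cartanE8 3 7 = 0 from rfl, show cartanE8 4 0 = 0 from rfl, show cartanE8 4 1 = 0 from rfl, show cartanE8 4 2 = 0 from rfl, show cartanE8 4 3 = -1 from rfl, show cartanE8 4 4 = 2 from rfl, show cartanE8 4 5 = -1 from rfl, show cartanE8 4 6 = 0 from rfl, show cartanE8 4 7 = 0 from rfl, show cartanE8 5 0 = 0 from rfl, show cartanE8 5 1 = 0 from rfl, show cartanE8 5 2 = 0 from rfl, show cartanE8 5 3 = 0 from rfl, show cartanE8 5 4 = -1 from rfl, show cartanE8 5 5 = 2 from rfl, show cartanE8 5 6 = -1 from rfl, show cartanE8 5 7 = 0 from rfl, show cartanE8 6 0 = 0 from rfl, show cartanE8 6 1 = 0 from rfl, show cartanE8 6 2 = 0 from rfl, show cartanE8 6 3 = 0 from rfl, show cartanE8 6 4 = 0 from rfl, show cartanE8 6 5 = -1 from rfl, show cartanE8 6 6 = 2 from rfl, show cartanE8 6 7 = -1 from rfl, show cartanE8 7 0 = 0 from rfl, show cartanE8 7 1 = 0 from rfl, show cartanE8 7 2 = 0 from rfl,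 show cartanE8 7 3 = 0 from rfl, show cartanE8 7 4 = 0 from rfl, show cartanE8 7 5 = 0 from rfl, show cartanE8 7 6 = -1 from rfl, show cartanE8 7 7 = 2 from rfl]
  ring

def codesL : List ℕ := [0, 3125, 3750, 3875, 3900, 3880, 3905, 4030, 4655, 7780, 3901, 3906, 4031, 4656, 7781, 4056, 4681, 7806, 4806, 7931, 8556, 4811, 7936, 8561, 8686, 8711, 8712]

set_option synthInstance.maxHeartbeats 2000000 in
set_option synthInstance.maxSize 5000 in
set_option maxHeartbeats 4000000 in
set_option maxRecDepth 100000 in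
lemma natEnum : ∀ a < 3, ∀ b < 3, ∀ c < 4, ∀ d < 5, ∀ e < 4, ∀ f < 3,
    a*a+b*b+c*c+d*d+e*e+f*f = a*c+b*d+c*d+d*e+e*f+f →
    a+5*b+25*c+125*d+625*e+3125*f ∈ codesL := by decide

set_option synthInstance.maxHeartbeats 2000000 in
set_option synthInstance.maxSize 5000 in
set_option maxHeartbeats 4000000 in
set_option maxRecDepth 100000 in
lemma pairBound : ∀ m ∈ codesL, ∀ n ∈ codesL,
    2*((m%5)*(n%5) + (m/5%5)*(n/5%5) + (m/25%5)*(n/25%5) + (m/125%5)*(n/125%5)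
       + (m/625%5)*(n/625%5) + (m/3125%5)*(n/3125%5)) + 2 =
      (m%5)*(n/25%5) + (m/25%5)*(n%5) + (m/5%5)*(n/125%5) + (m/125%5)*(n/5%5)
      + (m/25%5)*(n/125%5) + (m/125%5)*(n/25%5) + (m/125%5)*(n/625%5) + (m/625%5)*(n/125%5)
      + (m/625%5)*(n/3125%5) + (m/3125%5)*(n/625%5) + (m/3125%5) + (n/3125%5) →
    m%5 + n%5 ≤ 2 ∧ m/5%5 + n/5%5 ≤ 3 ∧ m/25%5 + n/25%5 ≤ 4 ∧ m/125%5 + n/125%5 ≤ 6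
      ∧ m/625%5 + n/625%5 ≤ 5 ∧ m/3125%5 + n/3125%5 ≤ 4 := by decide

lemma boundsLem (a b c d e f : ℤ) (ha : 0 ≤ a) (hb : 0 ≤ b) (hc : 0 ≤ c) (hd : 0 ≤ d)
    (he : 0 ≤ e) (hf : 0 ≤ f)
    (h : a*a+b*b+c*c+d*d+e*e+f*f = a*c+b*d+c*d+d*e+e*f+f) :
    a ≤ 2 ∧ b ≤ 2 ∧ c ≤ 3 ∧ d ≤ 4 ∧ e ≤ 3 ∧ f ≤ 2 := by
  have hf2 : f ≤ 2 := by
    nlinarith [sq_nonneg (2*a-c), sq_nonneg (2*b-d), sq_nonneg (3*c-2*d),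
      sq_nonneg (5*d-6*e), sq_nonneg (4*e-5*f)]
  refine ⟨?_, ?_, ?_, ?_, ?_, hf2⟩
  · nlinarith [sq_nonneg (2*b-d), sq_nonneg (2*c-d-a), sq_nonneg (2*d-2*e-a),
      sq_nonneg (2*e-2*f-a), sq_nonneg (2*f-a)]
  · nlinarith [sq_nonneg (2*a-c), sq_nonneg (3*c-2*d), sq_nonneg (4*d-3*e-3*b),
      sq_nonneg (5*e-4*f-3*b), sq_nonneg (2*f-b)]
  · nlinarith [sq_nonneg (2*a-c), sq_nonneg (2*b-d), sq_nonneg (3*d-2*e-2*c),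
      sq_nonneg (4*e-3*f-2*c), sq_nonneg (5*f-2*c)]
  · nlinarith [sq_nonneg (2*a-c), sq_nonneg (2*b-d), sq_nonneg (3*c-2*d),
      sq_nonneg (2*e-f-d), sq_nonneg (3*f-d)]
  · nlinarith [sq_nonneg (2*a-c), sq_nonneg (2*b-d), sq_nonneg (3*c-2*d),
      sq_nonneg (5*d-6*e), sq_nonneg (2*f-e)]

/-- every element of the stratum gives a code in `codesL`. -/
lemma memCode (β : Fin 8 → ℤ) (hβ : β ∈ Δ7posE8) :
    ∃ a b c d e f : ℕ, β 0 = a ∧ β 1 = b ∧ β 2 = c ∧ β 3 = d ∧ β 4 = e ∧ β 5 = f ∧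
      a < 3 ∧ b < 3 ∧ c < 4 ∧ d < 5 ∧ e < 4 ∧ f < 3 ∧
      a+5*b+25*c+125*d+625*e+3125*f ∈ codesL := by
  obtain ⟨hn, hp, h6, h7⟩ := hβ
  obtain ⟨a, ha⟩ := Int.eq_ofNat_of_zero_le (hp 0)
  obtain ⟨b, hb⟩ := Int.eq_ofNat_of_zero_le (hp 1)
  obtain ⟨c, hc⟩ := Int.eq_ofNat_of_zero_le (hp 2)
  obtain ⟨d, hd⟩ := Int.eq_ofNat_of_zero_le (hp 3)
  obtain ⟨e, he⟩ := Int.eq_ofNat_of_zero_le (hp 4)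
  obtain ⟨f, hf⟩ := Int.eq_ofNat_of_zero_le (hp 5)
  rw [innE8_eq, ha, hb, hc, hd, he, hf, h6, h7] at hn
  have key : (a : ℤ)*a+b*b+c*c+d*d+e*e+f*f = a*c+b*d+c*d+d*e+e*f+f := by linarith
  have keyN : a*a+b*b+c*c+d*d+e*e+f*f = a*c+b*d+c*d+d*e+e*f+f := by exact_mod_cast key
  obtain ⟨Ba, Bb, Bc, Bd, Be, Bf⟩ := boundsLem a b c d e f (by positivity) (by positivity)
    (by positivity) (by positivity) (by positivity) (by positivity) key
  have Ba' : a < 3 := by exact_mod_cast Int.lt_add_one_iff.mpr Ba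
  have Bb' : b < 3 := by exact_mod_cast Int.lt_add_one_iff.mpr Bb
  have Bc' : c < 4 := by exact_mod_cast Int.lt_add_one_iff.mpr Bc
  have Bd' : d < 5 := by exact_mod_cast Int.lt_add_one_iff.mpr Bd
  have Be' : e < 4 := by exact_mod_cast Int.lt_add_one_iff.mpr Be
  have Bf' : f < 3 := by exact_mod_cast Int.lt_add_one_iff.mpr Bf
  exact ⟨a, b, c, d, e, f, ha, hb, hc, hd, he, hf, Ba', Bb', Bc', Bd', Be', Bf',
    natEnum a Ba' b Bb' c Bc' d Bd' e Be' f Bf' keyN⟩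

lemma tau_eq : -(lowestE8 + 2 • α8) = ![2, 3, 4, 6, 5, 4, 3, 0] := by
  funext i
  fin_cases i <;> rfl

set_option maxHeartbeats 4000000 in
/-- If `β₁, β₂ ∈ Δ₇⁺` are orthogonal, there is a unique
root `β₃ ∈ Δ₇⁺` orthogonal to both `β₁` and `β₂` such that
`β₁ + β₂ + β₃ = -(α̂₈ + 2α₈)`. -/
theorem stmt_12 (β₁ β₂ : Fin 8 → ℤ) (h₁ : β₁ ∈ Δ7posE8) (h₂ : β₂ ∈ Δ7posE8)
    (horth : innE8 β₁ β₂ = 0) :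
    ∃! β₃, β₃ ∈ Δ7posE8 ∧ innE8 β₃ β₁ = 0 ∧ innE8 β₃ β₂ = 0 ∧
      β₁ + β₂ + β₃ = -(lowestE8 + 2 • α8) := by
  obtain ⟨hn1, hp1, h16, h17⟩ := h₁
  obtain ⟨hn2, hp2, h26, h27⟩ := h₂
  set τ : Fin 8 → ℤ := ![2, 3, 4, 6, 5, 4, 3, 0] with hτdef
  have hτ : -(lowestE8 + 2 • α8) = τ := tau_eq
  set w : Fin 8 → ℤ := τ - β₁ - β₂ with hwdef
  have hw : ∀ i, w i = τ i - β₁ i - β₂ i := fun i => rfl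
  have hτ0 : τ 0 = 2 := rfl
  have hτ1 : τ 1 = 3 := rfl
  have hτ2 : τ 2 = 4 := rfl
  have hτ3 : τ 3 = 6 := rfl
  have hτ4 : τ 4 = 5 := rfl
  have hτ5 : τ 5 = 4 := rfl
  have hτ6 : τ 6 = 3 := rfl
  have hτ7 : τ 7 = 0 := rfl
  have hn1' := hn1; have hn2' := hn2; have horth' := horth
  rw [innE8_eq] at hn1' hn2' horth'
  rw [h16, h17] at hn1' horth'
  rw [h26, h27] at hn2' horth'
  -- nonnegativity of w
  have hwpos : ∀ i, 0 ≤ w i := by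
    obtain ⟨a1, b1, c1, d1, e1, f1, P0, P1, P2, P3, P4, P5, A1, B1, C1, D1, E1, F1, M1⟩ :=
      memCode β₁ ⟨hn1, hp1, h16, h17⟩
    obtain ⟨a2, b2, c2, d2, e2, f2, Q0, Q1, Q2, Q3, Q4, Q5, A2, B2, C2, D2, E2, F2, M2⟩ :=
      memCode β₂ ⟨hn2, hp2, h26, h27⟩
    set m := a1+5*b1+25*c1+125*d1+625*e1+3125*f1 with hm
    set n := a2+5*b2+25*c2+125*d2+625*e2+3125*f2 with hn
    have dm : m%5 = a1 ∧ m/5%5 = b1 ∧ m/25%5 = c1 ∧ m/125%5 = d1 ∧ m/625%5 = e1 ∧ m/3125%5 = f1 := by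
      refine ⟨?_, ?_, ?_, ?_, ?_, ?_⟩ <;> omega
    have dn : n%5 = a2 ∧ n/5%5 = b2 ∧ n/25%5 = c2 ∧ n/125%5 = d2 ∧ n/625%5 = e2 ∧ n/3125%5 = f2 := by
      refine ⟨?_, ?_, ?_, ?_, ?_, ?_⟩ <;> omega
    have horthN : (2*(a1*a2+b1*b2+c1*c2+d1*d2+e1*e2+f1*f2) + 2 : ℤ) =
        a1*c2+c1*a2+b1*d2+d1*b2+c1*d2+d1*c2+d1*e2+e1*d2+e1*f2+f1*e2+f1+f2 := by
      rw [P0, P1, P2, P3, P4, P5, Q0, Q1, Q2, Q3, Q4, Q5] at horth'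
      push_cast
      linarith
    have horthN' : 2*(a1*a2+b1*b2+c1*c2+d1*d2+e1*e2+f1*f2) + 2 =
        a1*c2+c1*a2+b1*d2+d1*b2+c1*d2+d1*c2+d1*e2+e1*d2+e1*f2+f1*e2+f1+f2 := by
      exact_mod_cast horthN
    have PB := pairBound m M1 n M2 (by
      rw [dm.1, dm.2.1, dm.2.2.1, dm.2.2.2.1, dm.2.2.2.2.1, dm.2.2.2.2.2,
        dn.1, dn.2.1, dn.2.2.1, dn.2.2.2.1, dn.2.2.2.2.1, dn.2.2.2.2.2]
      linarith [horthN'])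
    rw [dm.1, dm.2.1, dm.2.2.1, dm.2.2.2.1, dm.2.2.2.2.1, dm.2.2.2.2.2,
      dn.1, dn.2.1, dn.2.2.1, dn.2.2.2.1, dn.2.2.2.2.1, dn.2.2.2.2.2] at PB
    obtain ⟨S0, S1, S2, S3, S4, S5⟩ := PB
    intro i
    fin_cases i <;> simp only [hw]
    · show (0:ℤ) ≤ τ 0 - β₁ 0 - β₂ 0
      rw [hτ0, P0, Q0]; have : (a1:ℤ) + a2 ≤ 2 := by exact_mod_cast S0
      linarith
    · show (0:ℤ) ≤ τ 1 - β₁ 1 - β₂ 1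
      rw [hτ1, P1, Q1]; have : (b1:ℤ) + b2 ≤ 3 := by exact_mod_cast S1
      linarith
    · show (0:ℤ) ≤ τ 2 - β₁ 2 - β₂ 2
      rw [hτ2, P2, Q2]; have : (c1:ℤ) + c2 ≤ 4 := by exact_mod_cast S2
      linarith
    · show (0:ℤ) ≤ τ 3 - β₁ 3 - β₂ 3
      rw [hτ3, P3, Q3]; have : (d1:ℤ) + d2 ≤ 6 := by exact_mod_cast S3
      linarith
    · show (0:ℤ) ≤ τ 4 - β₁ 4 - β₂ 4
      rw [hτ4, P4, Q4]; have : (e1:ℤ) + e2 ≤ 5 := by exact_mod_cast S4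
      linarith
    · show (0:ℤ) ≤ τ 5 - β₁ 5 - β₂ 5
      rw [hτ5, P5, Q5]; have : (f1:ℤ) + f2 ≤ 4 := by exact_mod_cast S5
      linarith
    · show (0:ℤ) ≤ τ 6 - β₁ 6 - β₂ 6
      rw [hτ6, h16, h26]; norm_num
    · show (0:ℤ) ≤ τ 7 - β₁ 7 - β₂ 7
      rw [hτ7, h17, h27]; norm_num
  refine ⟨w, ⟨⟨?_, hwpos, ?_, ?_⟩, ?_, ?_, ?_⟩, ?_⟩
  · -- norm
    rw [innE8_eq]
    simp only [hw, hτ0, hτ1, hτ2, hτ3, hτ4, hτ5, hτ6, hτ7, h16, h17, h26, h27]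
    linear_combination hn1' + hn2' + 2 * horth'
  · rw [hw 6, hτ6, h16, h26]; ring
  · rw [hw 7, hτ7, h17, h27]; ring
  · rw [innE8_eq]
    simp only [hw, hτ0, hτ1, hτ2, hτ3, hτ4, hτ5, hτ6, hτ7, h16, h17, h26, h27]
    linear_combination -hn1' - horth'
  · rw [innE8_eq]
    simp only [hw, hτ0, hτ1, hτ2, hτ3, hτ4, hτ5, hτ6, hτ7, h16, h17, h26, h27]
    linear_combination -hn2' - horth'
  · rw [hτ, hwdef]; abel
  · rintro y ⟨-, -, -, hsum⟩
    have : β₁ + β₂ + y = β₁ + β₂ + w := by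
      rw [hsum, hτ, hwdef]; abel
    exact add_left_cancel this
end

section
/- With f: Λ(E₆) → (ℤ/3)^5 the homomorphism extending αᵢ ↦ sᵢ as in the previous statement, the map f: Δ(E₆) → Γ is a bijection, where Γ = {x ∈ (ℤ/3)^5 : x ≠ 0, (x|x) = 2}. -/
/-- The Cartan matrix of `E₆` (node 2 attached to node 4, chain 1–3–4–5–6). -/
def cartanE6 : Matrix (Fin 6) (Fin 6) ℤ :=
  !![ 2,  0, -1,  0,  0,  0;
      0,  2,  0, -1,  0,  0;
     -1,  0,  2, -1,  0,  0;
      0, -1, -1,  2, -1,  0;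
      0,  0,  0, -1,  2, -1;
      0,  0,  0,  0, -1,  2]

/-- The inner product on the `E₆` root lattice (simple-root coordinates). -/
def innE6 (x y : Fin 6 → ℤ) : ℤ := ∑ i, ∑ j, x i * cartanE6 i j * y j

/-- The roots of `E₆`: the lattice vectors of squared length `2`. -/
def ΔE6 : Set (Fin 6 → ℤ) := {β | innE6 β β = 2}

/-- The images of the simple roots of `E₆` in `(ℤ/3)^5`. -/
def sE6 : Fin 6 → Fin 5 → ZMod 3
  | 0 => ![1, 2, 0, 0, 0]
  | 1 => ![0, 0, 0, 1, 2]
  | 2 => ![0, 1, 2, 0, 0]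
  | 3 => ![0, 0, 1, 2, 0]
  | 4 => ![0, 0, 0, 1, 1]
  | 5 => ![1, 1, 1, 1, 1]

/-- The compression map `f : Λ(E₆) → (ℤ/3)^5`, extending `αᵢ ↦ sᵢ`. -/
def fE6 (β : Fin 6 → ℤ) : Fin 5 → ZMod 3 := ∑ i, β i • sE6 i

/-- `Γ = {x ∈ (ℤ/3)^5 | x ≠ 0, (x|x) = 2}` (with the standard form). -/
def ΓE6 : Set (Fin 5 → ZMod 3) := {x | x ≠ 0 ∧ (∑ i, x i * x i) = 2}


/- ## Auxiliary material -/

/-- The quadratic form of `E₆` as an explicit polynomial. -/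
def qpolyE6 (a b c d e f : ℤ) : ℤ :=
  2*a^2+2*b^2+2*c^2+2*d^2+2*e^2+2*f^2 - 2*a*c - 2*b*d - 2*c*d - 2*d*e - 2*e*f

/-- The 72 roots of `E₆`, listed explicitly. -/
def R72 : List (Fin 6 → ℤ) := [
  ![-1, -2, -2, -3, -2, -1],
  ![-1, -1, -2, -3, -2, -1],
  ![-1, -1, -2, -2, -2, -1],
  ![-1, -1, -2, -2, -1, -1],
  ![-1, -1, -2, -2, -1, 0],
  ![-1, -1, -1, -2, -2, -1],
  ![-1, -1, -1, -2, -1, -1],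
  ![-1, -1, -1, -2, -1, 0],
  ![-1, -1, -1, -1, -1, -1],
  ![-1, -1, -1, -1, -1, 0],
  ![-1, -1, -1, -1, 0, 0],
  ![-1, 0, -1, -1, -1, -1],
  ![-1, 0, -1, -1, -1, 0],
  ![-1, 0, -1, -1, 0, 0],
  ![-1, 0, -1, 0, 0, 0],
  ![-1, 0, 0, 0, 0, 0],
  ![0, -1, -1, -2, -2, -1],
  ![0, -1, -1, -2, -1, -1],
  ![0, -1, -1, -2, -1, 0],
  ![0, -1, -1, -1, -1, -1],
  ![0, -1, -1, -1, -1, 0],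
  ![0, -1, -1, -1, 0, 0],
  ![0, -1, 0, -1, -1, -1],
  ![0, -1, 0, -1, -1, 0],
  ![0, -1, 0, -1, 0, 0],
  ![0, -1, 0, 0, 0, 0],
  ![0, 0, -1, -1, -1, -1],
  ![0, 0, -1, -1, -1, 0],
  ![0, 0, -1, -1, 0, 0],
  ![0, 0, -1, 0, 0, 0],
  ![0, 0, 0, -1, -1, -1],
  ![0, 0, 0, -1, -1, 0],
  ![0, 0, 0, -1, 0, 0],
  ![0, 0, 0, 0, -1, -1],
  ![0, 0, 0, 0, -1, 0],
  ![0, 0, 0, 0, 0, -1],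
  ![0, 0, 0, 0, 0, 1],
  ![0, 0, 0, 0, 1, 0],
  ![0, 0, 0, 0, 1, 1],
  ![0, 0, 0, 1, 0, 0],
  ![0, 0, 0, 1, 1, 0],
  ![0, 0, 0, 1, 1, 1],
  ![0, 0, 1, 0, 0, 0],
  ![0, 0, 1, 1, 0, 0],
  ![0, 0, 1, 1, 1, 0],
  ![0, 0, 1, 1, 1, 1],
  ![0, 1, 0, 0, 0, 0],
  ![0, 1, 0, 1, 0, 0],
  ![0, 1, 0, 1, 1, 0],
  ![0, 1, 0, 1, 1, 1],
  ![0, 1, 1, 1, 0, 0],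
  ![0, 1, 1, 1, 1, 0],
  ![0, 1, 1, 1, 1, 1],
  ![0, 1, 1, 2, 1, 0],
  ![0, 1, 1, 2, 1, 1],
  ![0, 1, 1, 2, 2, 1],
  ![1, 0, 0, 0, 0, 0],
  ![1, 0, 1, 0, 0, 0],
  ![1, 0, 1, 1, 0, 0],
  ![1, 0, 1, 1, 1, 0],
  ![1, 0, 1, 1, 1, 1],
  ![1, 1, 1, 1, 0, 0],
  ![1, 1, 1, 1, 1, 0],
  ![1, 1, 1, 1, 1, 1],
  ![1, 1, 1, 2, 1, 0],
  ![1, 1, 1, 2, 1, 1],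
  ![1, 1, 1, 2, 2, 1],
  ![1, 1, 2, 2, 1, 0],
  ![1, 1, 2, 2, 1, 1],
  ![1, 1, 2, 2, 2, 1],
  ![1, 1, 2, 3, 2, 1],
  ![1, 2, 2, 3, 2, 1]]

lemma innE6_self_eq (β : Fin 6 → ℤ) :
    innE6 β β = qpolyE6 (β 0) (β 1) (β 2) (β 3) (β 4) (β 5) := by
  simp only [innE6, Fin.sum_univ_six, show cartanE6 0 0 = 2 from rfl, show cartanE6 0 1 = 0 from rfl, show cartanE6 0 2 = -1 from rfl, show cartanE6 0 3 = 0 from rfl, show cartanE6 0 4 = 0 from rfl, show cartanE6 0 5 = 0 from rfl, show cartanE6 1 0 = 0 from rfl, show cartanE6 1 1 = 2 from rfl, show cartanE6 1 2 = 0 from rfl, show cartanE6 1 3 = -1 from rfl, show cartanE6 1 4 = 0 from rfl, show cartanE6 1 5 = 0 from rfl, show cartanE6 2 0 = -1 from rfl, show cartanE6 2 1 = 0 from rfl, show cartanE6 2 2 = 2 from rfl, show cartanE6 2 3 = -1 from rfl, show cartanE6 2 4 = 0 from rfl, show cartanE6 2 5 = 0 from rfl, show cartanE6 3 0 = 0 from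 rfl, show cartanE6 3 1 = -1 from rfl, show cartanE6 3 2 = -1 from rfl, show cartanE6 3 3 = 2 from rfl, show cartanE6 3 4 = -1 from rfl, show cartanE6 3 5 = 0 from rfl, show cartanE6 4 0 = 0 from rfl, show cartanE6 4 1 = 0 from rfl, show cartanE6 4 2 = 0 from rfl, show cartanE6 4 3 = -1 from rfl, show cartanE6 4 4 = 2 from rfl, show cartanE6 4 5 = -1 from rfl, show cartanE6 5 0 = 0 from rfl, show cartanE6 5 1 = 0 from rfl, show cartanE6 5 2 = 0 from rfl, show cartanE6 5 3 = 0 from rfl, show cartanE6 5 4 = -1 from rfl, show cartanE6 5 5 = 2 from rfl, qpolyE6]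
  ring

lemma int_sq_bound {x c : ℤ} (hc : 0 ≤ c) (h : x^2 ≤ c^2 + 2*c) : -c ≤ x ∧ x ≤ c := by
  constructor
  · by_contra hx
    push_neg at hx
    have hx' : x ≤ -c - 1 := by omega
    nlinarith [sq_nonneg (x + c + 1)]
  · by_contra hx
    push_neg at hx
    have hx' : c + 1 ≤ x := by omega
    nlinarith [sq_nonneg (x - c - 1)]

lemma encode3 (x : ℤ) (h1 : -1 ≤ x) (h2 : x ≤ 1) : ∃ A : Fin 3, (A:ℤ) - 1 = x :=
  ⟨⟨(x+1).toNat, by omega⟩, by show ((x+1).toNat : ℤ) - 1 = x; omega⟩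

lemma encode5 (x : ℤ) (h1 : -2 ≤ x) (h2 : x ≤ 2) : ∃ A : Fin 5, (A:ℤ) - 2 = x :=
  ⟨⟨(x+2).toNat, by omega⟩, by show ((x+2).toNat : ℤ) - 2 = x; omega⟩

lemma encode7 (x : ℤ) (h1 : -3 ≤ x) (h2 : x ≤ 3) : ∃ A : Fin 7, (A:ℤ) - 3 = x :=
  ⟨⟨(x+3).toNat, by omega⟩, by show ((x+3).toNat : ℤ) - 3 = x; omega⟩

set_option maxRecDepth 100000 in
lemma enum72 : ∀ (a : Fin 3) (b : Fin 5) (c : Fin 5) (d : Fin 7) (e : Fin 5) (f : Fin 3),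
    qpolyE6 ((a:ℤ)-1) ((b:ℤ)-2) ((c:ℤ)-2) ((d:ℤ)-3) ((e:ℤ)-2) ((f:ℤ)-1) = 2 →
    ![(a:ℤ)-1, (b:ℤ)-2, (c:ℤ)-2, (d:ℤ)-3, (e:ℤ)-2, (f:ℤ)-1] ∈ R72 := by decide

lemma qpoly_mem : ∀ a b c d e f : ℤ, qpolyE6 a b c d e f = 2 →
    ![a, b, c, d, e, f] ∈ R72 := by
  intro a b c d e f h
  simp only [qpolyE6] at h
  have ba : a^2 ≤ 3 := by nlinarith [sq_nonneg (2*b-d), sq_nonneg (2*c-d-a), sq_nonneg (2*d-2*e-a), sq_nonneg (2*e-2*f-a), sq_nonneg (2*f-a)]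
  have bb : b^2 ≤ 8 := by nlinarith [sq_nonneg (2*a-c), sq_nonneg (3*c-2*d), sq_nonneg (4*d-3*e-3*b), sq_nonneg (5*e-4*f-3*b), sq_nonneg (2*f-b)]
  have bc : c^2 ≤ 8 := by nlinarith [sq_nonneg (2*a-c), sq_nonneg (2*b-d), sq_nonneg (3*d-2*e-2*c), sq_nonneg (4*e-3*f-2*c), sq_nonneg (5*f-2*c)]
  have bd : d^2 ≤ 15 := by nlinarith [sq_nonneg (2*a-c), sq_nonneg (2*b-d), sq_nonneg (3*c-2*d), sq_nonneg (2*e-f-d), sq_nonneg (3*f-d)]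
  have be : e^2 ≤ 8 := by nlinarith [sq_nonneg (2*a-c), sq_nonneg (2*b-d), sq_nonneg (3*c-2*d), sq_nonneg (5*d-6*e), sq_nonneg (2*f-e)]
  have bf : f^2 ≤ 3 := by nlinarith [sq_nonneg (2*a-c), sq_nonneg (2*b-d), sq_nonneg (3*c-2*d), sq_nonneg (5*d-6*e), sq_nonneg (4*e-5*f)]
  obtain ⟨ha1, ha2⟩ := int_sq_bound (by norm_num : (0:ℤ) ≤ 1) ba
  obtain ⟨hb1, hb2⟩ := int_sq_bound (by norm_num : (0:ℤ) ≤ 2) bb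
  obtain ⟨hc1, hc2⟩ := int_sq_bound (by norm_num : (0:ℤ) ≤ 2) bc
  obtain ⟨hd1, hd2⟩ := int_sq_bound (by norm_num : (0:ℤ) ≤ 3) bd
  obtain ⟨he1, he2⟩ := int_sq_bound (by norm_num : (0:ℤ) ≤ 2) be
  obtain ⟨hf1, hf2⟩ := int_sq_bound (by norm_num : (0:ℤ) ≤ 1) bf
  obtain ⟨A, hA⟩ := encode3 a ha1 ha2
  obtain ⟨B, hB⟩ := encode5 b hb1 hb2
  obtain ⟨Cc, hC⟩ := encode5 c hc1 hc2
  obtain ⟨D, hD⟩ := encode7 d hd1 hd2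
  obtain ⟨E, hE⟩ := encode5 e he1 he2
  obtain ⟨F, hF⟩ := encode3 f hf1 hf2
  rw [← hA, ← hB, ← hC, ← hD, ← hE, ← hF] at h ⊢
  refine enum72 A B Cc D E F ?_
  simp only [qpolyE6]
  linear_combination h

set_option maxRecDepth 100000 in
lemma mem_R72_root : ∀ β ∈ R72, innE6 β β = 2 := by decide

lemma delta_eq : ΔE6 = {β | β ∈ R72} := by
  ext β
  constructor
  · intro hβ
    have h : qpolyE6 (β 0) (β 1) (β 2) (β 3) (β 4) (β 5) = 2 := by
      rw [← innE6_self_eq]; exact hβ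
    have hm := qpoly_mem (β 0) (β 1) (β 2) (β 3) (β 4) (β 5) h
    have hfun : β = ![β 0, β 1, β 2, β 3, β 4, β 5] := by
      funext i; fin_cases i <;> rfl
    show β ∈ R72
    rw [hfun]; exact hm
  · intro hβ
    exact mem_R72_root β hβ

set_option maxRecDepth 100000 in
lemma mapsto72 : ∀ β ∈ R72, fE6 β ≠ 0 ∧ (∑ i, fE6 β i * fE6 β i) = 2 := by decide

set_option maxRecDepth 100000 in
lemma inj72 : ∀ β ∈ R72, ∀ γ ∈ R72, fE6 β = fE6 γ → β = γ := by decide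

set_option maxRecDepth 100000 in
lemma surj72 : ∀ x : Fin 5 → ZMod 3, (x ≠ 0 ∧ (∑ i, x i * x i) = 2) →
    ∃ β ∈ R72, fE6 β = x := by decide

/-- The map `f : Δ(E₆) → Γ` is a bijection. -/
theorem stmt_14 : Set.BijOn fE6 ΔE6 ΓE6 := by
  constructor
  · intro β hβ
    have hm := mapsto72 β (by rw [delta_eq] at hβ; exact hβ)
    exact ⟨hm.1, hm.2⟩
  refine ⟨?_, ?_⟩
  · intro β hβ γ hγ hfg
    exact inj72 β (by rw [delta_eq] at hβ; exact hβ) γ (by rw [delta_eq] at hγ; exact hγ) hfg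
  · intro x hx
    obtain ⟨β, hβ, he⟩ := surj72 x ⟨hx.1, hx.2⟩
    exact ⟨β, by rw [delta_eq]; exact hβ, he⟩
end

section
/- Let f: Λ(E₆) → (ℤ/3)^5 be the compression map above, let Γ = {x ≠ 0 : (x|x) = 2}, let β, α be positive roots of E₆ with β + α not a root and β ≠ α and ⟨β,α⟩ ≥ 0. Then f(β) + f(α) ∉ Γ. -/
set_option maxRecDepth 4000

/-- The positive roots of `E₆`. -/
def ΔposE6 : Set (Fin 6 → ℤ) := {β | innE6 β β = 2 ∧ ∀ i, 0 ≤ β i}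

lemma inn_expand (x y : Fin 6 → ℤ) : innE6 x y =
    2*x 0*y 0 + 2*x 1*y 1 + 2*x 2*y 2 + 2*x 3*y 3 + 2*x 4*y 4 + 2*x 5*y 5
    - x 0*y 2 - x 2*y 0 - x 1*y 3 - x 3*y 1 - x 2*y 3 - x 3*y 2
    - x 3*y 4 - x 4*y 3 - x 4*y 5 - x 5*y 4 := by
  simp only [innE6, Fin.sum_univ_six, show cartanE6 0 0 = 2 from rfl, show cartanE6 0 1 = 0 from rfl, show cartanE6 0 2 = -1 from rfl, show cartanE6 0 3 = 0 from rfl, show cartanE6 0 4 = 0 from rfl, show cartanE6 0 5 = 0 from rfl, show cartanE6 1 0 = 0 from rfl, show cartanE6 1 1 = 2 from rfl, show cartanE6 1 2 = 0 from rfl, show cartanE6 1 3 = -1 from rfl, show cartanE6 1 4 = 0 from rfl, show cartanE6 1 5 = 0 from rfl, show cartanE6 2 0 = -1 from rfl, show cartanE6 2 1 = 0 from rfl, show cartanE6 2 2 = 2 from rfl, show cartanE6 2 3 = -1 from rfl, show cartanE6 2 4 = 0 from rfl, show cartanE6 2 5 = 0 from rfl, show cartanE6 3 0 = 0 from rfl,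 show cartanE6 3 1 = -1 from rfl, show cartanE6 3 2 = -1 from rfl, show cartanE6 3 3 = 2 from rfl, show cartanE6 3 4 = -1 from rfl, show cartanE6 3 5 = 0 from rfl, show cartanE6 4 0 = 0 from rfl, show cartanE6 4 1 = 0 from rfl, show cartanE6 4 2 = 0 from rfl, show cartanE6 4 3 = -1 from rfl, show cartanE6 4 4 = 2 from rfl, show cartanE6 4 5 = -1 from rfl, show cartanE6 5 0 = 0 from rfl, show cartanE6 5 1 = 0 from rfl, show cartanE6 5 2 = 0 from rfl, show cartanE6 5 3 = 0 from rfl, show cartanE6 5 4 = -1 from rfl, show cartanE6 5 5 = 2 from rfl]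
  ring

lemma fE6_add (x y : Fin 6 → ℤ) : fE6 (x + y) = fE6 x + fE6 y := by
  simp [fE6, add_smul, Finset.sum_add_distrib]

lemma norm_f (x : Fin 6 → ℤ) :
    (∑ i, fE6 x i * fE6 x i) = ((innE6 x x : ℤ) : ZMod 3) := by
  rw [inn_expand]
  push_cast
  simp only [fE6, Fin.sum_univ_five, Fin.sum_univ_six, Finset.sum_apply, Pi.smul_apply,
    zsmul_eq_mul, Pi.mul_apply, Pi.intCast_apply, show sE6 0 0 = 1 from rfl, show sE6 0 1 = 2 from rfl, show sE6 0 2 = 0 from rfl, show sE6 0 3 = 0 from rfl, show sE6 0 4 = 0 from rfl, show sE6 1 0 = 0 from rfl, show sE6 1 1 = 0 from rfl, show sE6 1 2 = 0 from rfl, show sE6 1 3 = 1 from rfl, show sE6 1 4 = 2 from rfl, show sE6 2 0 = 0 from rfl, show sE6 2 1 = 1 from rfl, show sE6 2 2 = 2 from rfl, show sE6 2 3 = 0 from rfl, show sE6 2 4 = 0 from rfl, show sE6 3 0 = 0 from rfl, show sE6 3 1 = 0 from rfl, show sE6 3 2 = 1 from rfl, show sE6 3 3 = 2 from rfl, show sE6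 3 4 = 0 from rfl, show sE6 4 0 = 0 from rfl, show sE6 4 1 = 0 from rfl, show sE6 4 2 = 0 from rfl, show sE6 4 3 = 1 from rfl, show sE6 4 4 = 1 from rfl, show sE6 5 0 = 1 from rfl, show sE6 5 1 = 1 from rfl, show sE6 5 2 = 1 from rfl, show sE6 5 3 = 1 from rfl, show sE6 5 4 = 1 from rfl]
  have key : ∀ a b c d e f : ZMod 3,
      (a * 1 + b * 0 + c * 0 + d * 0 + e * 0 + f * 1) * (a * 1 + b * 0 + c * 0 + d * 0 + e * 0 + f * 1) +
      (a * 2 + b * 0 + c * 1 + d * 0 + e * 0 + f * 1) * (a * 2 + b * 0 + c * 1 + d * 0 + e * 0 + f * 1) +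
      (a * 0 + b * 0 + c * 2 + d * 1 + e * 0 + f * 1) * (a * 0 + b * 0 + c * 2 + d * 1 + e * 0 + f * 1) +
      (a * 0 + b * 1 + c * 0 + d * 2 + e * 1 + f * 1) * (a * 0 + b * 1 + c * 0 + d * 2 + e * 1 + f * 1) +
      (a * 0 + b * 2 + c * 0 + d * 0 + e * 1 + f * 1) * (a * 0 + b * 2 + c * 0 + d * 0 + e * 1 + f * 1) =
      2 * a * a + 2 * b * b + 2 * c * c + 2 * d * d + 2 * e * e + 2 * f * f - a * c - c * a - b * d - d * b - c * d - d * c - d * e - e * d - e * f - f * e := by decide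
  exact key _ _ _ _ _ _

/-- If `β, α` are positive roots of `E₆` such that
`β + α` is not a root, `β ≠ α`, and `⟨β, α⟩ ≥ 0`, then `f β + f α ∉ Γ`. -/
theorem stmt_16 (β α : Fin 6 → ℤ) (hβ : β ∈ ΔposE6) (hα : α ∈ ΔposE6)
    (hsum : β + α ∉ ΔE6) (hne : β ≠ α) (hinner : 0 ≤ innE6 β α) :
    fE6 β + fE6 α ∉ ΓE6 := by
  obtain ⟨h2β, hposβ⟩ := hβ
  obtain ⟨h2α, hposα⟩ := hα
  rintro ⟨hx0, hx2⟩
  rw [← fE6_add, norm_f] at hx2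
  have q1 := h2β; rw [inn_expand] at q1
  have q2 := h2α; rw [inn_expand] at q2
  have e3 := inn_expand β α
  have hsumv : innE6 (β + α) (β + α) = 4 + 2 * innE6 β α := by
    rw [inn_expand]
    simp only [Pi.add_apply]
    linear_combination q1 + q2 - 2 * e3
  have hc1 : innE6 β α ≤ 1 := by
    by_contra hc
    push_neg at hc
    have key : 30*(2*(β 0 - α 0) - (β 2 - α 2))^2 + 30*(2*(β 1 - α 1) - (β 3 - α 3))^2
        + 10*(3*(β 2 - α 2) - 2*(β 3 - α 3))^2 + 2*(5*(β 3 - α 3) - 6*(β 4 - α 4))^2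
        + 3*(4*(β 4 - α 4) - 5*(β 5 - α 5))^2 + 45*(β 5 - α 5)^2
        = 60 * (4 - 2 * innE6 β α) := by
      linear_combination 60 * q1 + 60 * q2 + 120 * e3
    have n0 := sq_nonneg (2*(β 0 - α 0) - (β 2 - α 2))
    have n1 := sq_nonneg (2*(β 1 - α 1) - (β 3 - α 3))
    have n2 := sq_nonneg (3*(β 2 - α 2) - 2*(β 3 - α 3))
    have n3 := sq_nonneg (5*(β 3 - α 3) - 6*(β 4 - α 4))
    have n4 := sq_nonneg (4*(β 4 - α 4) - 5*(β 5 - α 5))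
    have n5 := sq_nonneg (β 5 - α 5)
    have z5 : (β 5 - α 5)^2 = 0 :=
      le_antisymm (by linarith) n5
    have z4 : (4*(β 4 - α 4) - 5*(β 5 - α 5))^2 = 0 :=
      le_antisymm (by linarith) n4
    have z3 : (5*(β 3 - α 3) - 6*(β 4 - α 4))^2 = 0 :=
      le_antisymm (by linarith) n3
    have z2 : (3*(β 2 - α 2) - 2*(β 3 - α 3))^2 = 0 :=
      le_antisymm (by linarith) n2
    have z1 : (2*(β 1 - α 1) - (β 3 - α 3))^2 = 0 :=
      le_antisymm (by linarith) n1
    have z0 : (2*(β 0 - α 0) - (β 2 - α 2))^2 = 0 :=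
      le_antisymm (by linarith) n0
    rw [pow_eq_zero_iff two_ne_zero] at z0 z1 z2 z3 z4 z5
    have h5 : β 5 = α 5 := by linarith
    have h4 : β 4 = α 4 := by linarith
    have h3 : β 3 = α 3 := by linarith
    have h2 : β 2 = α 2 := by linarith
    have h1 : β 1 = α 1 := by linarith
    have h0 : β 0 = α 0 := by linarith
    exact hne (funext fun i => by
      fin_cases i <;> [exact h0; exact h1; exact h2; exact h3; exact h4; exact h5])
  have hcase : innE6 β α = 0 ∨ innE6 β α = 1 := by omega
  rw [hsumv] at hx2
  rcases hcase with h | h <;> rw [h] at hx2 <;> norm_num at hx2 <;> revert hx2 <;> decide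
end
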